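/- For all finite simple graphs G₁ and G₂ with mvc(G₁) ≤ mvc(G₂), there exist a finite simple graph Ĝ and a positive integer q such that min-mdg(Ĝ) = mvc(G₂) + q and mvc(Ĝ) = mvc(G₁) + q. -/

import Mathlib

open scoped Classical

noncomputable section

/-- `C` is a vertex cover of `G`: every edge has an endpoint in `C`. -/
def IsVC {V : Type*} (G : SimpleGraph V) (C : Finset V) : Prop :=
  ∀ ⦃u w : V⦄, G.Adj u w → u ∈ C ∨ w ∈ C

/-- `mvc G` is the minimum size of a vertex cover of `G`. -/
def mvc {V : Type*} [Fintype V] (G : SimpleGraph V) : ℕ :=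
  sInf {n | ∃ C : Finset V, IsVC G C ∧ C.card = n}

/-- `M` is a matching of `G` (a set of pairwise disjoint edges of `G`). -/
def IsMatchingSet {V : Type*} (G : SimpleGraph V) (M : Finset (Sym2 V)) : Prop :=
  (∀ e ∈ M, e ∈ G.edgeSet) ∧
    ∀ e ∈ M, ∀ f ∈ M, e ≠ f → ∀ v, v ∈ e → v ∉ f

/-- `M` is a maximal matching of `G`: no edge of `G` can be added to it. -/
def IsMaximalMatchingSet {V : Type*} (G : SimpleGraph V) (M : Finset (Sym2 V)) : Prop :=
  IsMatchingSet G M ∧ ∀ e ∈ G.edgeSet, e ∉ M → ¬ IsMatchingSet G (insert e M)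

/-- `minEd G` is the minimum of `2·|M|` over all maximal matchings `M` of `G`
(the minimum size of a vertex cover producible by the edge deletion heuristic). -/
def minEd {V : Type*} [Fintype V] (G : SimpleGraph V) : ℕ :=
  sInf {n | ∃ M : Finset (Sym2 V), IsMaximalMatchingSet G M ∧ n = 2 * M.card}

/-- Degree of `v` inside the induced subgraph on the vertex set `S`. -/
def degIn {V : Type*} (G : SimpleGraph V) (S : Finset V) (v : V) : ℕ :=
  (S.filter fun w => G.Adj v w).card

/-- An MDG run: a sequence of vertices, each of maximum degree in the currently
remaining induced subgraph, whose removal leaves no edges. -/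
def IsMDGRun {V : Type*} (G : SimpleGraph V) : List V → Finset V → Prop
  | [], S => ∀ u ∈ S, ∀ w ∈ S, ¬ G.Adj u w
  | v :: L, S => v ∈ S ∧ (∀ u ∈ S, degIn G S u ≤ degIn G S v) ∧ IsMDGRun G L (S.erase v)

/-- `minMdg G`: minimum length of an MDG run on `G` (minimum size of a vertex cover
producible by the maximum-degree greedy heuristic). -/
def minMdg {V : Type*} [Fintype V] (G : SimpleGraph V) : ℕ :=
  sInf {k | ∃ L : List V, L.length = k ∧ IsMDGRun G L Finset.univ}

/-- The edge relation of the 4-vertex ED gadget: edges {v₁,v₂}, {v₃,v₄}, {v₁,v₃}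
(on indices 0,1,2,3). -/
def gadgetRel (i j : Fin 4) : Prop :=
  s(i, j) = s(0, 1) ∨ s(i, j) = s(2, 3) ∨ s(i, j) = s(0, 2)

lemma gadgetRel_symm {i j : Fin 4} (h : gadgetRel i j) : gadgetRel j i := by
  unfold gadgetRel at h ⊢
  rwa [Sym2.eq_swap]

lemma gadgetRel_irrefl (i : Fin 4) : ¬ gadgetRel i i := by
  rintro (h | h | h) <;>
    (rw [Sym2.eq_iff] at h; rcases h with ⟨h1, h2⟩ | ⟨h1, h2⟩ <;> simp_all)

/-- The ED-gadget graph of `G`: four copies `v₁,…,v₄` of each vertex, gadget edges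
inside each copy, and all 16 edges `{aᵢ,bⱼ}` for each edge `{a,b}` of `G`. -/
def edGadget {V : Type*} (G : SimpleGraph V) : SimpleGraph (V × Fin 4) where
  Adj x y := (x.1 = y.1 ∧ gadgetRel x.2 y.2) ∨ G.Adj x.1 y.1
  symm := by
    constructor
    rintro ⟨a, i⟩ ⟨b, j⟩ (⟨h1, h2⟩ | h)
    · exact Or.inl ⟨h1.symm, gadgetRel_symm h2⟩
    · exact Or.inr h.symm
  loopless := by
    constructor
    rintro ⟨a, i⟩ (⟨-, h2⟩ | h)
    · exact gadgetRel_irrefl i h2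
    · exact G.loopless.irrefl a h

/-- The join of two vertex-disjoint graphs. -/
def graphJoin {α β : Type*} (G : SimpleGraph α) (H : SimpleGraph β) :
    SimpleGraph (α ⊕ β) where
  Adj x y :=
    match x, y with
    | .inl a, .inl b => G.Adj a b
    | .inr a, .inr b => H.Adj a b
    | _, _ => True
  symm := by
    constructor
    rintro (a | a) (b | b) h
    · exact G.adj_symm h
    · exact trivial
    · exact trivial
    · exact H.adj_symm h
  loopless := by
    constructor
    rintro (a | a) h
    · exact G.loopless.irrefl a h
    · exact H.loopless.irrefl a h

/-- The disjoint union of two vertex-disjoint graphs. -/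
def graphUnion {α β : Type*} (G : SimpleGraph α) (H : SimpleGraph β) :
    SimpleGraph (α ⊕ β) where
  Adj x y :=
    match x, y with
    | .inl a, .inl b => G.Adj a b
    | .inr a, .inr b => H.Adj a b
    | _, _ => False
  symm := by
    constructor
    rintro (a | a) (b | b) h
    · exact G.adj_symm h
    · exact h.elim
    · exact h.elim
    · exact H.adj_symm h
  loopless := by
    constructor
    rintro (a | a) h
    · exact G.loopless.irrefl a h
    · exact H.loopless.irrefl a h

/-- Adjacency of the MDG-gadget graph: the gadget vertex `uᵢᵉ` for `e = {u,v}` is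
encoded as `Sum.inr (⟨(u,v), _⟩, i)`.  Edges: `{uᵢᵉ, vⱼᵉ}` for all `i, j`, plus
`{u, u₁ᵉ}` and `{v, v₁ᵉ}`. -/
def mdgAdj {V : Type*} (G : SimpleGraph V) (Δ : ℕ) :
    (V ⊕ ({p : V × V // G.Adj p.1 p.2} × Fin (Δ + 1))) →
      (V ⊕ ({p : V × V // G.Adj p.1 p.2} × Fin (Δ + 1))) → Prop
  | .inl _, .inl _ => False
  | .inl u, .inr (⟨(a, _), _⟩, i) => u = a ∧ i = 0
  | .inr (⟨(a, _), _⟩, i), .inl u => u = a ∧ i = 0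
  | .inr (⟨(a, b), _⟩, _), .inr (⟨(c, d), _⟩, _) => a = d ∧ b = c

/-- The MDG-gadget graph of `G` with parameter `Δ`. -/
def mdgGadget {V : Type*} (G : SimpleGraph V) (Δ : ℕ) :
    SimpleGraph (V ⊕ ({p : V × V // G.Adj p.1 p.2} × Fin (Δ + 1))) where
  Adj := mdgAdj G Δ
  symm := by
    constructor
    rintro (u | ⟨⟨⟨a, b⟩, hab⟩, i⟩) (v | ⟨⟨⟨c, d⟩, hcd⟩, j⟩) h
    · exact h.elim
    · exact h
    · exact h
    · exact ⟨h.2.symm, h.1.symm⟩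
  loopless := by
    constructor
    rintro (u | ⟨⟨⟨a, b⟩, hab⟩, i⟩) h
    · exact h.elim
    · exact G.ne_of_adj hab h.1
/-! ### Auxiliary development for stmt16 -/

section GeneralRun

variable {V : Type*} (G : SimpleGraph V)

lemma degIn_mono {S S' : Finset V} (h : S' ⊆ S) (v : V) :
    degIn G S' v ≤ degIn G S v :=
  Finset.card_le_card (Finset.filter_subset_filter _ h)

lemma run_mem {L : List V} {S : Finset V} (h : IsMDGRun G L S) :
    ∀ v ∈ L, v ∈ S := by
  induction L generalizing S with
  | nil => simp
  | cons x L ih =>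
    intro v hv
    rcases List.mem_cons.1 hv with rfl | hv'
    · exact h.1
    · exact Finset.mem_of_mem_erase (ih h.2.2 v hv')

lemma run_nodup {L : List V} {S : Finset V} (h : IsMDGRun G L S) :
    L.Nodup := by
  induction L generalizing S with
  | nil => simp
  | cons x L ih =>
    refine List.nodup_cons.2 ⟨fun hx => ?_, ih h.2.2⟩
    exact absurd (run_mem G h.2.2 x hx) (Finset.notMem_erase _ _)

lemma run_cover {L : List V} {S : Finset V} (h : IsMDGRun G L S) :
    ∀ u ∈ S, ∀ w ∈ S, G.Adj u w → u ∈ L ∨ w ∈ L := by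
  induction L generalizing S with
  | nil => intro u hu w hw hadj; exact absurd hadj (h u hu w hw)
  | cons x L ih =>
    intro u hu w hw hadj
    by_cases hux : u = x
    · exact Or.inl (by simp [hux])
    by_cases hwx : w = x
    · exact Or.inr (by simp [hwx])
    rcases ih h.2.2 u (Finset.mem_erase.2 ⟨hux, hu⟩) w (Finset.mem_erase.2 ⟨hwx, hw⟩) hadj with h' | h'
    · exact Or.inl (List.mem_cons_of_mem _ h')
    · exact Or.inr (List.mem_cons_of_mem _ h')

/-- A run through a list of degree-1, pairwise nonadjacent vertices covering
all remaining edges is a valid MDG run, provided all degrees are ≤ 1. -/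
lemma matching_run :
    ∀ (L : List V) (S : Finset V),
    (∀ v ∈ S, degIn G S v ≤ 1) →
    (∀ x ∈ L, x ∈ S) →
    (∀ x ∈ L, degIn G S x = 1) →
    L.Nodup →
    (∀ x ∈ L, ∀ y ∈ L, ¬ G.Adj x y) →
    (∀ u ∈ S, ∀ w ∈ S, G.Adj u w → u ∈ L ∨ w ∈ L) →
    IsMDGRun G L S := by
  intro L
  induction L with
  | nil =>
    intro S _ _ _ _ _ hcov u hu w hw hadj
    rcases hcov u hu w hw hadj with h | h <;> simp at h
  | cons x L ih =>
    intro S hdeg hmem hone hnod hpair hcov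
    have hxS : x ∈ S := hmem x (by simp)
    refine ⟨hxS, fun u hu => ?_, ?_⟩
    · rw [hone x (by simp)]; exact hdeg u hu
    · apply ih
      · intro v hv
        exact le_trans (degIn_mono G (Finset.erase_subset _ _) v)
          (hdeg v (Finset.mem_of_mem_erase hv))
      · intro y hy
        exact Finset.mem_erase.2 ⟨fun h => (List.nodup_cons.1 hnod).1 (h ▸ hy),
          hmem y (List.mem_cons_of_mem _ hy)⟩
      · intro y hy
        have hxy : ¬ G.Adj y x := hpair y (List.mem_cons_of_mem _ hy) x (by simp)
        have hEq : (S.erase x).filter (fun w => G.Adj y w)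
            = S.filter (fun w => G.Adj y w) := by
          ext w
          simp only [Finset.mem_filter, Finset.mem_erase]
          constructor
          · rintro ⟨⟨-, hw⟩, ha⟩; exact ⟨hw, ha⟩
          · rintro ⟨hw, ha⟩
            exact ⟨⟨fun hwx => hxy (hwx ▸ ha), hw⟩, ha⟩
        show degIn G (S.erase x) y = 1
        unfold degIn
        rw [hEq]
        exact hone y (List.mem_cons_of_mem _ hy)
      · exact (List.nodup_cons.1 hnod).2
      · intro a ha b hb
        exact hpair a (List.mem_cons_of_mem _ ha) b (List.mem_cons_of_mem _ hb)
      · intro u hu w hw hadj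
        rcases hcov u (Finset.mem_of_mem_erase hu) w (Finset.mem_of_mem_erase hw) hadj with h | h
        · rcases List.mem_cons.1 h with rfl | h'
          · exact absurd rfl (Finset.mem_erase.1 hu).1
          · exact Or.inl h'
        · rcases List.mem_cons.1 h with rfl | h'
          · exact absurd rfl (Finset.mem_erase.1 hw).1
          · exact Or.inr h'

end GeneralRun
section Gadget

/-- Vertex type of the spider gadget: `d` spiders on 7 vertices plus `p` extra edges. -/
abbrev TT (d p : ℕ) := (Fin d × Fin 7) ⊕ (Fin p × Fin 2)

/-- Adjacency within a 7-vertex spider: center `0`, middles `1,2,3`, leaves `4,5,6`,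
edges `0–1,0–2,0–3,1–4,2–5,3–6`. -/
abbrev sadj (a b : Fin 7) : Prop :=
  (a.val = 0 ∧ (b.val = 1 ∨ b.val = 2 ∨ b.val = 3)) ∨
  (b.val = 0 ∧ (a.val = 1 ∨ a.val = 2 ∨ a.val = 3)) ∨
  (b.val = a.val + 3 ∧ 1 ≤ a.val ∧ a.val ≤ 3) ∨
  (a.val = b.val + 3 ∧ 1 ≤ b.val ∧ b.val ≤ 3)

def SpAdj (d p : ℕ) : TT d p → TT d p → Prop
  | .inl (i, a), .inl (i', a') => i = i' ∧ sadj a a'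
  | .inr (k, b), .inr (k', b') => k = k' ∧ b ≠ b'
  | _, _ => False

/-- The spider gadget graph. -/
def SpG (d p : ℕ) : SimpleGraph (TT d p) where
  Adj := SpAdj d p
  symm := by
    constructor
    rintro (⟨i, a⟩ | ⟨k, b⟩) (⟨i', a'⟩ | ⟨k', b'⟩) h
    · exact ⟨h.1.symm, by have := h.2; omega⟩
    · exact h.elim
    · exact h.elim
    · exact ⟨h.1.symm, h.2.symm⟩
  loopless := by
    constructor
    rintro (⟨i, a⟩ | ⟨k, b⟩) h
    · have := h.2; omega
    · exact h.2 rfl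

variable {d p : ℕ}

def ctr (i : Fin d) : TT d p := .inl (i, ⟨0, by omega⟩)
def mid (i : Fin d) (j : Fin 3) : TT d p := .inl (i, ⟨j.val + 1, by omega⟩)
def lf (i : Fin d) (j : Fin 3) : TT d p := .inl (i, ⟨j.val + 4, by omega⟩)
def pv (k : Fin p) (b : Fin 2) : TT d p := .inr (k, b)

@[simp] lemma ctr_inj {i i' : Fin d} : (ctr i : TT d p) = ctr i' ↔ i = i' := by
  simp [ctr]

@[simp] lemma mid_inj {i i' : Fin d} {j j' : Fin 3} :
    (mid i j : TT d p) = mid i' j' ↔ i = i' ∧ j = j' := by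
  simp [mid, Fin.ext_iff] <;> omega

@[simp] lemma lf_inj {i i' : Fin d} {j j' : Fin 3} :
    (lf i j : TT d p) = lf i' j' ↔ i = i' ∧ j = j' := by
  simp [lf, Fin.ext_iff] <;> omega

@[simp] lemma pv_inj {k k' : Fin p} {b b' : Fin 2} :
    (pv k b : TT d p) = pv k' b' ↔ k = k' ∧ b = b' := by
  simp [pv]

@[simp] lemma ctr_ne_mid {i i' : Fin d} {j : Fin 3} : (ctr i : TT d p) ≠ mid i' j := by
  intro h
  simp only [ctr, mid, lf, Sum.inl.injEq, Prod.mk.injEq, Fin.mk.injEq] at h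
  obtain ⟨-, h⟩ := h
  omega

@[simp] lemma mid_ne_ctr {i i' : Fin d} {j : Fin 3} : (mid i' j : TT d p) ≠ ctr i := by
  intro h
  simp only [ctr, mid, lf, Sum.inl.injEq, Prod.mk.injEq, Fin.mk.injEq] at h
  obtain ⟨-, h⟩ := h
  omega

@[simp] lemma ctr_ne_lf {i i' : Fin d} {j : Fin 3} : (ctr i : TT d p) ≠ lf i' j := by
  intro h
  simp only [ctr, mid, lf, Sum.inl.injEq, Prod.mk.injEq, Fin.mk.injEq] at h
  obtain ⟨-, h⟩ := h
  omega

@[simp] lemma lf_ne_ctr {i i' : Fin d} {j : Fin 3} : (lf i' j : TT d p) ≠ ctr i := by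
  intro h
  simp only [ctr, mid, lf, Sum.inl.injEq, Prod.mk.injEq, Fin.mk.injEq] at h
  obtain ⟨-, h⟩ := h
  omega

@[simp] lemma mid_ne_lf {i i' : Fin d} {j j' : Fin 3} : (mid i j : TT d p) ≠ lf i' j' := by
  simp [mid, lf, Fin.ext_iff] <;> omega

@[simp] lemma lf_ne_mid {i i' : Fin d} {j j' : Fin 3} : (lf i' j' : TT d p) ≠ mid i j := by
  simp [mid, lf, Fin.ext_iff] <;> omega

@[simp] lemma ctr_ne_pv {i : Fin d} {k : Fin p} {b : Fin 2} : (ctr i : TT d p) ≠ pv k b := by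
  simp [ctr, pv]

@[simp] lemma mid_ne_pv {i : Fin d} {j : Fin 3} {k : Fin p} {b : Fin 2} :
    (mid i j : TT d p) ≠ pv k b := by simp [mid, pv]

@[simp] lemma lf_ne_pv {i : Fin d} {j : Fin 3} {k : Fin p} {b : Fin 2} :
    (lf i j : TT d p) ≠ pv k b := by simp [lf, pv]

@[simp] lemma pv_ne_ctr {i : Fin d} {k : Fin p} {b : Fin 2} : (pv k b : TT d p) ≠ ctr i := by
  simp [ctr, pv]

@[simp] lemma pv_ne_mid {i : Fin d} {j : Fin 3} {k : Fin p} {b : Fin 2} :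
    (pv k b : TT d p) ≠ mid i j := by simp [mid, pv]

@[simp] lemma pv_ne_lf {i : Fin d} {j : Fin 3} {k : Fin p} {b : Fin 2} :
    (pv k b : TT d p) ≠ lf i j := by simp [lf, pv]

lemma adj_ctr_iff {i : Fin d} {u : TT d p} :
    (SpG d p).Adj (ctr i) u ↔ ∃ j : Fin 3, u = mid i j := by
  constructor
  · intro h
    rcases u with ⟨i', a'⟩ | ⟨k', b'⟩
    · obtain ⟨rfl, hs⟩ : i = i' ∧ sadj ⟨0, by omega⟩ a' := h
      have hv : a'.val = 1 ∨ a'.val = 2 ∨ a'.val = 3 := by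
        have := a'.isLt; simp only [sadj, Fin.val_mk] at hs; omega
      refine ⟨⟨a'.val - 1, by omega⟩, ?_⟩
      simp [mid, Fin.ext_iff] <;> omega
    · exact h.elim
  · rintro ⟨j, rfl⟩
    refine ⟨rfl, ?_⟩
    show sadj _ _
    fin_cases j <;> decide

lemma adj_mid_iff {i : Fin d} {j : Fin 3} {u : TT d p} :
    (SpG d p).Adj (mid i j) u ↔ u = ctr i ∨ u = lf i j := by
  constructor
  · intro h
    rcases u with ⟨i', a'⟩ | ⟨k', b'⟩
    · obtain ⟨rfl, hs⟩ : i = i' ∧ sadj ⟨j.val + 1, by omega⟩ a' := h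
      have hj := j.isLt
      have hv : a'.val = 0 ∨ a'.val = j.val + 4 := by
        have := a'.isLt; simp only [sadj, Fin.val_mk] at hs; omega
      rcases hv with hv | hv
      · left; simp only [ctr, Sum.inl.injEq, Prod.mk.injEq, true_and]; exact Fin.ext hv
      · right; simp [lf, Fin.ext_iff] <;> omega
    · exact h.elim
  · rintro (rfl | rfl)
    · refine ⟨rfl, ?_⟩
      show sadj _ _
      fin_cases j <;> decide
    · refine ⟨rfl, ?_⟩
      show sadj _ _
      fin_cases j <;> decide

lemma adj_lf_iff {i : Fin d} {j : Fin 3} {u : TT d p} :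
    (SpG d p).Adj (lf i j) u ↔ u = mid i j := by
  constructor
  · intro h
    rcases u with ⟨i', a'⟩ | ⟨k', b'⟩
    · obtain ⟨rfl, hs⟩ : i = i' ∧ sadj ⟨j.val + 4, by omega⟩ a' := h
      have hj := j.isLt
      have hv : a'.val = j.val + 1 := by
        have := a'.isLt; simp only [sadj, Fin.val_mk] at hs; omega
      simp [mid, Fin.ext_iff] <;> omega
    · exact h.elim
  · rintro rfl
    refine ⟨rfl, ?_⟩
    show sadj _ _
    fin_cases j <;> decide

lemma adj_pv_iff {k : Fin p} {b : Fin 2} {u : TT d p} :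
    (SpG d p).Adj (pv k b) u ↔ ∃ b' : Fin 2, b' ≠ b ∧ u = pv k b' := by
  constructor
  · intro h
    rcases u with ⟨i', a'⟩ | ⟨k', b'⟩
    · exact h.elim
    · obtain ⟨rfl, hb⟩ : k = k' ∧ b ≠ b' := h
      exact ⟨b', Ne.symm hb, rfl⟩
  · rintro ⟨b', hb, rfl⟩
    exact ⟨rfl, Ne.symm hb⟩

end Gadget
section Degrees

variable {d p : ℕ}

lemma fin2_cases (b : Fin 2) : b = 0 ∨ b = 1 := by fin_cases b <;> simp

abbrev bflip (b : Fin 2) : Fin 2 := ⟨1 - b.val, by omega⟩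

lemma fin2_ne {b b' : Fin 2} (h : b' ≠ b) : b' = bflip b := by
  fin_cases b <;> fin_cases b' <;> first | rfl | simp_all <;> decide

lemma card_triple_le {α : Type*} [DecidableEq α] (a b c : α) :
    ({a, b, c} : Finset α).card ≤ 3 := by
  have h1 := Finset.card_insert_le a ({b, c} : Finset α)
  have h2 := Finset.card_insert_le b ({c} : Finset α)
  have h3 : ({c} : Finset α).card = 1 := Finset.card_singleton c
  omega

lemma card_pair_le {α : Type*} [DecidableEq α] (a b : α) :
    ({a, b} : Finset α).card ≤ 2 := by
  have h1 := Finset.card_insert_le a ({b} : Finset α)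
  have h3 : ({b} : Finset α).card = 1 := Finset.card_singleton b
  omega

lemma degIn_le_three (S : Finset (TT d p)) (v : TT d p) : degIn (SpG d p) S v ≤ 3 := by
  rcases v with ⟨i, a⟩ | ⟨k, b⟩
  · obtain ⟨x, y, z, hxyz⟩ : ∃ x y z : Fin 7,
        ∀ a' : Fin 7, sadj a a' → a' = x ∨ a' = y ∨ a' = z := by
      fin_cases a
      · exact ⟨1, 2, 3, by decide⟩
      · exact ⟨0, 4, 4, by decide⟩
      · exact ⟨0, 5, 5, by decide⟩
      · exact ⟨0, 6, 6, by decide⟩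
      · exact ⟨1, 1, 1, by decide⟩
      · exact ⟨2, 2, 2, by decide⟩
      · exact ⟨3, 3, 3, by decide⟩
    have hsub : S.filter (fun w => (SpG d p).Adj (.inl (i, a)) w)
        ⊆ {Sum.inl (i, x), Sum.inl (i, y), Sum.inl (i, z)} := by
      intro u hu
      rw [Finset.mem_filter] at hu
      rcases u with ⟨i', a'⟩ | ⟨k', b'⟩
      · obtain ⟨rfl, hs⟩ : i = i' ∧ sadj a a' := hu.2
        rcases hxyz a' hs with rfl | rfl | rfl <;> simp
      · exact (hu.2).elim
    exact le_trans (Finset.card_le_card hsub) (card_triple_le _ _ _)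
  · have hsub : S.filter (fun w => (SpG d p).Adj (.inr (k, b)) w)
        ⊆ {pv k 0, pv k 1} := by
      intro u hu
      rw [Finset.mem_filter] at hu
      rcases u with ⟨i', a'⟩ | ⟨k', b'⟩
      · exact (hu.2).elim
      · obtain ⟨rfl, hb⟩ : k = k' ∧ b ≠ b' := hu.2
        rcases fin2_cases b' with rfl | rfl <;> simp [pv]
    exact le_trans (Finset.card_le_card hsub) (le_trans (card_pair_le _ _) (by omega))

lemma degIn_ctr_eq (S : Finset (TT d p)) (i : Fin d) (h : ∀ j, mid i j ∈ S) :
    degIn (SpG d p) S (ctr i) = 3 := by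
  have hfe : S.filter (fun w => (SpG d p).Adj (ctr i) w) = {mid i 0, mid i 1, mid i 2} := by
    ext u
    simp only [Finset.mem_filter, Finset.mem_insert, Finset.mem_singleton]
    constructor
    · rintro ⟨hu, hadj⟩
      rcases adj_ctr_iff.1 hadj with ⟨j, rfl⟩
      fin_cases j <;> simp
    · rintro (rfl | rfl | rfl) <;> exact ⟨h _, adj_ctr_iff.2 ⟨_, rfl⟩⟩
  unfold degIn
  rw [hfe, Finset.card_insert_of_notMem (by simp),
    Finset.card_insert_of_notMem (by simp), Finset.card_singleton]

lemma degIn_mid_le_two (S : Finset (TT d p)) (i : Fin d) (j : Fin 3) :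
    degIn (SpG d p) S (mid i j) ≤ 2 := by
  have hsub : S.filter (fun w => (SpG d p).Adj (mid i j) w) ⊆ {ctr i, lf i j} := by
    intro u hu
    rw [Finset.mem_filter] at hu
    rcases adj_mid_iff.1 hu.2 with rfl | rfl <;> simp
  exact le_trans (Finset.card_le_card hsub) (card_pair_le _ _)

lemma degIn_mid_le_one {S : Finset (TT d p)} {i : Fin d} {j : Fin 3} (hc : ctr i ∉ S) :
    degIn (SpG d p) S (mid i j) ≤ 1 := by
  have hsub : S.filter (fun w => (SpG d p).Adj (mid i j) w) ⊆ {lf i j} := by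
    intro u hu
    rw [Finset.mem_filter] at hu
    rcases adj_mid_iff.1 hu.2 with rfl | rfl
    · exact absurd hu.1 hc
    · simp
  exact le_trans (Finset.card_le_card hsub) (by simp)

lemma degIn_mid_eq_one {S : Finset (TT d p)} {i : Fin d} {j : Fin 3}
    (hc : ctr i ∉ S) (hl : lf i j ∈ S) :
    degIn (SpG d p) S (mid i j) = 1 := by
  have hfe : S.filter (fun w => (SpG d p).Adj (mid i j) w) = {lf i j} := by
    ext u
    simp only [Finset.mem_filter, Finset.mem_singleton]
    constructor
    · rintro ⟨hu, hadj⟩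
      rcases adj_mid_iff.1 hadj with rfl | rfl
      · exact absurd hu hc
      · rfl
    · rintro rfl
      exact ⟨hl, adj_mid_iff.2 (Or.inr rfl)⟩
  unfold degIn; rw [hfe, Finset.card_singleton]

lemma degIn_lf_le_one (S : Finset (TT d p)) (i : Fin d) (j : Fin 3) :
    degIn (SpG d p) S (lf i j) ≤ 1 := by
  have hsub : S.filter (fun w => (SpG d p).Adj (lf i j) w) ⊆ {mid i j} := by
    intro u hu
    rw [Finset.mem_filter] at hu
    rw [adj_lf_iff.1 hu.2]; simp
  exact le_trans (Finset.card_le_card hsub) (by simp)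

lemma degIn_pv_le_one (S : Finset (TT d p)) (k : Fin p) (b : Fin 2) :
    degIn (SpG d p) S (pv k b) ≤ 1 := by
  have hsub : S.filter (fun w => (SpG d p).Adj (pv k b) w) ⊆ {pv k (bflip b)} := by
    intro u hu
    rw [Finset.mem_filter] at hu
    rcases adj_pv_iff.1 hu.2 with ⟨b', hb, rfl⟩
    rw [fin2_ne hb]; simp
  exact le_trans (Finset.card_le_card hsub) (by simp)

lemma degIn_pv_eq_one {S : Finset (TT d p)} {k : Fin p} {b : Fin 2}
    (h : pv k (bflip b) ∈ S) :
    degIn (SpG d p) S (pv k b) = 1 := by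
  have hfe : S.filter (fun w => (SpG d p).Adj (pv k b) w) = {pv k (bflip b)} := by
    ext u
    simp only [Finset.mem_filter, Finset.mem_singleton]
    constructor
    · rintro ⟨hu, hadj⟩
      rcases adj_pv_iff.1 hadj with ⟨b', hb, rfl⟩
      rw [fin2_ne hb]
    · rintro rfl
      refine ⟨h, adj_pv_iff.2 ⟨bflip b, ?_, rfl⟩⟩
      fin_cases b <;> decide
  unfold degIn; rw [hfe, Finset.card_singleton]

end Degrees
section Run

variable {d p : ℕ}

/-- Remaining vertices when the centers still to be picked are exactly those in `cs`. -/
def S1 (d p : ℕ) (cs : List (Fin d)) : Finset (TT d p) :=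
  Finset.univ.filter (fun v => ∀ i : Fin d, v = ctr i → i ∈ cs)

@[simp] lemma mem_S1_mid {cs : List (Fin d)} {i : Fin d} {j : Fin 3} :
    (mid i j : TT d p) ∈ S1 d p cs := by
  simp [S1]

@[simp] lemma mem_S1_lf {cs : List (Fin d)} {i : Fin d} {j : Fin 3} :
    (lf i j : TT d p) ∈ S1 d p cs := by
  simp [S1]

@[simp] lemma mem_S1_pv {cs : List (Fin d)} {k : Fin p} {b : Fin 2} :
    (pv k b : TT d p) ∈ S1 d p cs := by
  simp [S1]

@[simp] lemma mem_S1_ctr {cs : List (Fin d)} {i : Fin d} :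
    (ctr i : TT d p) ∈ S1 d p cs ↔ i ∈ cs := by
  simp [S1]

lemma inl_ne_zero_of_mem_S1nil {i : Fin d} {a : Fin 7}
    (h : (Sum.inl (i, a) : TT d p) ∈ S1 d p []) : a.val ≠ 0 := by
  intro ha
  have : (Sum.inl (i, a) : TT d p) = ctr i := by
    simp only [ctr, Sum.inl.injEq, Prod.mk.injEq, true_and]; exact Fin.ext ha
  rw [this] at h
  simp at h

/-- Index function for the matching phase. -/
def f23 (d p : ℕ) : (Fin d × Fin 3) ⊕ Fin p → TT d p
  | .inl (i, j) => mid i j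
  | .inr k => pv k 0

lemma f23_injective : Function.Injective (f23 d p) := by
  rintro (⟨i, j⟩ | k) (⟨i', j'⟩ | k') h <;> simp [f23] at h ⊢ <;> tauto

/-- The list of picks in the matching phase: all middles and the first endpoint of
each extra edge. -/
def L23 (d p : ℕ) : List (TT d p) :=
  (Finset.univ : Finset ((Fin d × Fin 3) ⊕ Fin p)).toList.map (f23 d p)

lemma mem_L23 {x : TT d p} : x ∈ L23 d p ↔ ∃ y, f23 d p y = x := by
  simp [L23]

lemma mid_mem_L23 {i : Fin d} {j : Fin 3} : (mid i j : TT d p) ∈ L23 d p :=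
  mem_L23.2 ⟨.inl (i, j), rfl⟩

lemma pv0_mem_L23 {k : Fin p} : (pv k 0 : TT d p) ∈ L23 d p :=
  mem_L23.2 ⟨.inr k, rfl⟩

lemma L23_nodup : (L23 d p).Nodup :=
  (Finset.nodup_toList _).map f23_injective

lemma L23_length : (L23 d p).length = 3 * d + p := by
  simp [L23]
  omega

lemma ctr_not_mem_S1nil {i : Fin d} : (ctr i : TT d p) ∉ S1 d p [] := by
  simp

/-- The matching phase is a valid MDG run. -/
lemma run23 : IsMDGRun (SpG d p) (L23 d p) (S1 d p []) := by
  apply matching_run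
  · intro v hv
    rcases v with ⟨i, a⟩ | ⟨k, b⟩
    · have ha := inl_ne_zero_of_mem_S1nil hv
      have hlt := a.isLt
      by_cases h3 : a.val ≤ 3
      · have : (Sum.inl (i, a) : TT d p) = mid i ⟨a.val - 1, by omega⟩ := by
          simp [mid, Fin.ext_iff] <;> omega
        rw [this]
        exact degIn_mid_le_one ctr_not_mem_S1nil
      · have : (Sum.inl (i, a) : TT d p) = lf i ⟨a.val - 4, by omega⟩ := by
          simp [lf, Fin.ext_iff] <;> omega
        rw [this]
        exact degIn_lf_le_one _ _ _
    · exact degIn_pv_le_one _ _ _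
  · intro x hx
    rcases mem_L23.1 hx with ⟨y, rfl⟩
    rcases y with ⟨i, j⟩ | k
    · exact mem_S1_mid
    · exact mem_S1_pv
  · intro x hx
    rcases mem_L23.1 hx with ⟨y, rfl⟩
    rcases y with ⟨i, j⟩ | k
    · exact degIn_mid_eq_one ctr_not_mem_S1nil mem_S1_lf
    · exact degIn_pv_eq_one mem_S1_pv
  · exact L23_nodup
  · intro x hx y hy hadj
    rcases mem_L23.1 hx with ⟨s, rfl⟩
    rcases mem_L23.1 hy with ⟨t, rfl⟩
    rcases s with ⟨i, j⟩ | k <;> rcases t with ⟨i', j'⟩ | k'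
    · rcases adj_mid_iff.1 hadj with h | h <;> simp [f23] at h
    · exact hadj.elim
    · exact hadj.elim
    · rcases adj_pv_iff.1 hadj with ⟨b', hb, heq⟩
      simp [f23] at heq
      exact hb heq.2.symm
  · intro u hu w hw hadj
    rcases u with ⟨i, a⟩ | ⟨k, b⟩
    · have ha := inl_ne_zero_of_mem_S1nil hu
      have hlt := a.isLt
      by_cases h3 : a.val ≤ 3
      · left
        have : (Sum.inl (i, a) : TT d p) = mid i ⟨a.val - 1, by omega⟩ := by
          simp [mid, Fin.ext_iff] <;> omega
        rw [this]; exact mid_mem_L23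
      · have : (Sum.inl (i, a) : TT d p) = lf i ⟨a.val - 4, by omega⟩ := by
          simp [lf, Fin.ext_iff] <;> omega
        rw [this] at hadj
        right
        rw [adj_lf_iff.1 hadj]
        exact mid_mem_L23
    · rcases adj_pv_iff.1 hadj with ⟨b', hb, rfl⟩
      rcases fin2_cases b with rfl | rfl
      · exact Or.inl pv0_mem_L23
      · have : b' = 0 := by fin_cases b' <;> simp_all
        rw [this]
        exact Or.inr pv0_mem_L23

lemma S1_erase {inst : DecidableEq (TT d p)} {c : Fin d} {cs : List (Fin d)} (hc : c ∉ cs) :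
    @Finset.erase _ inst (S1 d p (c :: cs)) (ctr c) = S1 d p cs := by
  ext v
  simp only [Finset.mem_erase, S1, Finset.mem_filter, Finset.mem_univ, true_and,
    List.mem_cons]
  constructor
  · rintro ⟨hne, h⟩ i rfl
    rcases h i rfl with rfl | h'
    · exact absurd rfl hne
    · exact h'
  · intro h
    refine ⟨fun hv => hc (h c hv), fun i hv => Or.inr (h i hv)⟩

lemma phase1 : ∀ cs : List (Fin d), cs.Nodup →
    IsMDGRun (SpG d p) (cs.map ctr ++ L23 d p) (S1 d p cs) := by
  intro cs
  induction cs with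
  | nil => intro _; simpa using (run23 (d := d) (p := p))
  | cons c cs ih =>
    intro hnod
    rcases List.nodup_cons.1 hnod with ⟨hc, hnod'⟩
    refine ⟨by simp, fun u hu => ?_, ?_⟩
    · rw [degIn_ctr_eq _ c (fun j => mem_S1_mid)]
      exact degIn_le_three _ _
    · show IsMDGRun (SpG d p) (cs.map ctr ++ L23 d p) _
      rw [S1_erase hc]
      exact ih hnod'

lemma S1_univ : S1 d p (List.finRange d) = Finset.univ := by
  ext v
  simp [S1, List.mem_finRange]

/-- The full greedy run: all centers, then the matching phase. -/
def RunL (d p : ℕ) : List (TT d p) :=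
  (List.finRange d).map ctr ++ L23 d p

lemma runL_isRun : IsMDGRun (SpG d p) (RunL d p) Finset.univ := by
  rw [← S1_univ]
  exact phase1 (List.finRange d) (List.nodup_finRange d)

lemma runL_length : (RunL d p).length = 4 * d + p := by
  simp [RunL, L23_length]
  omega

end Run
section Lower

variable {d p : ℕ}

lemma mem_erase_of {α : Type*} {inst : DecidableEq α} {a b : α} {s : Finset α}
    (h1 : a ≠ b) (h2 : a ∈ s) : a ∈ @Finset.erase α inst s b :=
  Finset.mem_erase.2 ⟨h1, h2⟩

lemma center_forced : ∀ (L : List (TT d p)) (S : Finset (TT d p)),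
    IsMDGRun (SpG d p) L S → ∀ i : Fin d, ctr i ∈ S → (∀ j, mid i j ∈ S) → ctr i ∈ L := by
  intro L
  induction L with
  | nil =>
    intro S h i hc hm
    exact absurd (adj_ctr_iff.2 ⟨0, rfl⟩ : (SpG d p).Adj (ctr i) (mid i 0))
      (h _ hc _ (hm 0))
  | cons x L ih =>
    intro S h i hc hm
    obtain ⟨hxS, hmax, hrun⟩ := h
    by_cases hxc : x = ctr i
    · exact hxc ▸ List.mem_cons_self
    · have hxm : ∀ j : Fin 3, x ≠ mid i j := by
        intro j hj
        subst hj
        have h1 : degIn (SpG d p) S (ctr i) = 3 := degIn_ctr_eq S i hm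
        have h2 : degIn (SpG d p) S (mid i j) ≤ 2 := degIn_mid_le_two S i j
        have h3 := hmax (ctr i) hc
        omega
      exact List.mem_cons_of_mem _ (ih _ hrun i (mem_erase_of (Ne.symm hxc) hc)
        fun j => mem_erase_of (fun h' => hxm j h'.symm) (hm j))

/-- Choice of a covered endpoint for each of the `3d + p` disjoint matching edges. -/
def gsel (C : Finset (TT d p)) : (Fin d × Fin 3) ⊕ Fin p → TT d p
  | .inl (i, j) => if mid i j ∈ C then mid i j else lf i j
  | .inr k => if pv k 0 ∈ C then pv k 0 else pv k 1

lemma gsel_mem {C : Finset (TT d p)}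
    (hcov : ∀ u w : TT d p, (SpG d p).Adj u w → u ∈ C ∨ w ∈ C) :
    ∀ s, gsel C s ∈ C := by
  rintro (⟨i, j⟩ | k)
  · by_cases h : mid i j ∈ C
    · simpa [gsel, h]
    · have := hcov (mid i j) (lf i j) (adj_mid_iff.2 (Or.inr rfl))
      simp only [gsel, h, if_false]
      tauto
  · by_cases h : pv k 0 ∈ C
    · simpa [gsel, h]
    · have := hcov (pv k 0) (pv k 1) (adj_pv_iff.2 ⟨1, by decide, rfl⟩)
      simp only [gsel, h, if_false]
      tauto

lemma gsel_injective (C : Finset (TT d p)) : Function.Injective (gsel C) := by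
  rintro (⟨i, j⟩ | k) (⟨i', j'⟩ | k') h <;> simp only [gsel] at h <;>
    split_ifs at h <;> simp_all

lemma card_index : Fintype.card ((Fin d × Fin 3) ⊕ Fin p) = 3 * d + p := by
  simp
  omega

lemma cover_card_lower {C : Finset (TT d p)}
    (hcov : ∀ u w : TT d p, (SpG d p).Adj u w → u ∈ C ∨ w ∈ C) :
    3 * d + p ≤ C.card := by
  have h := Finset.card_le_card_of_injOn (s := Finset.univ) (t := C) (gsel C)
    (fun s _ => gsel_mem hcov s) (Set.injOn_of_injective (gsel_injective C))
  rwa [Finset.card_univ, card_index] at h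

lemma cover_card_lower_ctr {C : Finset (TT d p)}
    (hcov : ∀ u w : TT d p, (SpG d p).Adj u w → u ∈ C ∨ w ∈ C)
    (hctr : ∀ i, (ctr i : TT d p) ∈ C) :
    4 * d + p ≤ C.card := by
  have hmem : ∀ s : Fin d ⊕ ((Fin d × Fin 3) ⊕ Fin p), Sum.elim ctr (gsel C) s ∈ C := by
    rintro (i | s)
    · exact hctr i
    · exact gsel_mem hcov s
  have hinj : Function.Injective (Sum.elim ctr (gsel C) :
      Fin d ⊕ ((Fin d × Fin 3) ⊕ Fin p) → TT d p) := by
    rintro (i | s) (i' | s') h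
    · simp only [Sum.elim_inl] at h; simp [ctr_inj.1 h]
    · exfalso
      rcases s' with ⟨i', j'⟩ | k' <;> simp only [Sum.elim_inl, Sum.elim_inr, gsel] at h <;>
        split_ifs at h <;> simp_all
    · exfalso
      rcases s with ⟨i', j'⟩ | k' <;> simp only [Sum.elim_inl, Sum.elim_inr, gsel] at h <;>
        split_ifs at h <;> simp_all
    · simp only [Sum.elim_inr] at h
      rw [gsel_injective C h]
  have h := Finset.card_le_card_of_injOn (s := Finset.univ) (t := C) (Sum.elim ctr (gsel C))
    (fun s _ => hmem s) (Set.injOn_of_injective hinj)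
  rw [Finset.card_univ] at h
  have hcard : Fintype.card (Fin d ⊕ ((Fin d × Fin 3) ⊕ Fin p)) = 4 * d + p := by
    simp
    omega
  rwa [hcard] at h

/-- The optimal vertex cover: all middles and first endpoints. -/
def C0 (d p : ℕ) : Finset (TT d p) := Finset.univ.image (f23 d p)

lemma C0_card : (C0 d p).card = 3 * d + p := by
  rw [C0, Finset.card_image_of_injective _ f23_injective, Finset.card_univ, card_index]

lemma mid_mem_C0 {i : Fin d} {j : Fin 3} : (mid i j : TT d p) ∈ C0 d p :=
  Finset.mem_image.2 ⟨.inl (i, j), Finset.mem_univ _, rfl⟩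

lemma pv0_mem_C0 {k : Fin p} : (pv k 0 : TT d p) ∈ C0 d p :=
  Finset.mem_image.2 ⟨.inr k, Finset.mem_univ _, rfl⟩

lemma C0_isVC : IsVC (SpG d p) (C0 d p) := by
  intro u w hadj
  rcases u with ⟨i, a⟩ | ⟨k, b⟩ <;> rcases w with ⟨i', a'⟩ | ⟨k', b'⟩
  · obtain ⟨rfl, hs⟩ : i = i' ∧ sadj a a' := hadj
    simp only [sadj] at hs
    have hone : (1 ≤ a.val ∧ a.val ≤ 3) ∨ (1 ≤ a'.val ∧ a'.val ≤ 3) := by omega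
    rcases hone with h | h
    · left
      have : (Sum.inl (i, a) : TT d p) = mid i ⟨a.val - 1, by omega⟩ := by
        simp [mid, Fin.ext_iff] <;> omega
      rw [this]; exact mid_mem_C0
    · right
      have : (Sum.inl (i, a') : TT d p) = mid i ⟨a'.val - 1, by omega⟩ := by
        simp [mid, Fin.ext_iff] <;> omega
      rw [this]; exact mid_mem_C0
  · exact hadj.elim
  · exact hadj.elim
  · obtain ⟨rfl, hb⟩ : k = k' ∧ b ≠ b' := hadj
    rcases fin2_cases b with rfl | rfl
    · exact Or.inl pv0_mem_C0
    · have : b' = 0 := by fin_cases b' <;> simp_all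
      subst this
      exact Or.inr pv0_mem_C0

lemma mvc_SpG : mvc (SpG d p) = 3 * d + p := by
  apply le_antisymm
  · exact Nat.sInf_le ⟨C0 d p, C0_isVC, C0_card⟩
  · refine le_csInf ⟨3 * d + p, C0 d p, C0_isVC, C0_card⟩ ?_
    rintro n ⟨C, hC, rfl⟩
    exact cover_card_lower (fun u w h => hC h)

lemma minMdg_SpG : minMdg (SpG d p) = 4 * d + p := by
  apply le_antisymm
  · exact Nat.sInf_le ⟨RunL d p, runL_length, runL_isRun⟩
  · refine le_csInf ⟨4 * d + p, RunL d p, runL_length, runL_isRun⟩ ?_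
    rintro n ⟨L, rfl, hrun⟩
    have hnd := run_nodup _ hrun
    have hcov := run_cover _ hrun
    have h1 : 4 * d + p ≤ L.toFinset.card := by
      apply cover_card_lower_ctr
      · intro u w h
        have := hcov u (Finset.mem_univ u) w (Finset.mem_univ w) h
        simpa [List.mem_toFinset] using this
      · intro i
        exact List.mem_toFinset.2
          (center_forced L Finset.univ hrun i (Finset.mem_univ _) (fun j => Finset.mem_univ _))
    rwa [List.toFinset_card_of_nodup hnd] at h1

end Lower
section Transport

variable {α β : Type*}

/-- Transport of a graph along an equivalence of vertex types. -/
def trG (e : α ≃ β) (G : SimpleGraph α) : SimpleGraph β where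
  Adj x y := G.Adj (e.symm x) (e.symm y)
  symm := ⟨fun _ _ h => G.adj_symm h⟩
  loopless := ⟨fun _ h => G.loopless.irrefl _ h⟩

lemma trG_trG (e : α ≃ β) (G : SimpleGraph α) : trG e.symm (trG e G) = G := by
  ext x y
  simp [trG]

lemma isVC_image (e : α ≃ β) (G : SimpleGraph α) {C : Finset α} (h : IsVC G C) :
    IsVC (trG e G) (C.image e) := by
  intro u w hadj
  rcases h hadj with h' | h'
  · exact Or.inl (Finset.mem_image.2 ⟨_, h', by simp⟩)
  · exact Or.inr (Finset.mem_image.2 ⟨_, h', by simp⟩)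

lemma mvc_trG [Fintype α] [Fintype β] (e : α ≃ β) (G : SimpleGraph α) :
    mvc (trG e G) = mvc G := by
  unfold mvc
  congr 1
  ext n
  constructor
  · rintro ⟨C, hC, rfl⟩
    have h2 := isVC_image e.symm (trG e G) hC
    rw [trG_trG] at h2
    exact ⟨C.image e.symm, h2, Finset.card_image_of_injective _ e.symm.injective⟩
  · rintro ⟨C, hC, rfl⟩
    exact ⟨C.image e, isVC_image e G hC, Finset.card_image_of_injective _ e.injective⟩

lemma degIn_image (e : α ≃ β) (G : SimpleGraph α) (S : Finset α) (v : α) :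
    degIn (trG e G) (S.image e) (e v) = degIn G S v := by
  unfold degIn
  rw [Finset.filter_image]
  rw [Finset.card_image_of_injective _ e.injective]
  congr 1
  apply Finset.filter_congr
  intro w _
  simp [trG]

lemma run_image (e : α ≃ β) (G : SimpleGraph α) :
    ∀ (L : List α) (S : Finset α), IsMDGRun G L S →
      IsMDGRun (trG e G) (L.map e) (S.image e) := by
  intro L
  induction L with
  | nil =>
    intro S h u hu w hw hadj
    rcases Finset.mem_image.1 hu with ⟨u0, hu0, rfl⟩
    rcases Finset.mem_image.1 hw with ⟨w0, hw0, rfl⟩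
    have : G.Adj u0 w0 := by simpa [trG] using hadj
    exact h u0 hu0 w0 hw0 this
  | cons x L ih =>
    rintro S ⟨hx, hmax, hrun⟩
    refine ⟨Finset.mem_image_of_mem e hx, ?_, ?_⟩
    · intro u hu
      rcases Finset.mem_image.1 hu with ⟨u0, hu0, rfl⟩
      rw [degIn_image, degIn_image]
      exact hmax u0 hu0
    · show IsMDGRun (trG e G) (L.map e) _
      rw [← Finset.image_erase e.injective]
      exact ih _ hrun

lemma minMdg_trG [Fintype α] [Fintype β] (e : α ≃ β) (G : SimpleGraph α) :
    minMdg (trG e G) = minMdg G := by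
  unfold minMdg
  congr 1
  ext n
  constructor
  · rintro ⟨L, rfl, hrun⟩
    have h2 := run_image e.symm (trG e G) L Finset.univ hrun
    rw [trG_trG] at h2
    refine ⟨L.map e.symm, by simp, ?_⟩
    have himg : (Finset.univ : Finset β).image e.symm = Finset.univ := by
      apply Finset.eq_univ_of_forall
      intro x
      exact Finset.mem_image.2 ⟨e x, Finset.mem_univ _, by simp⟩
    rwa [himg] at h2
  · rintro ⟨L, rfl, hrun⟩
    have h2 := run_image e G L Finset.univ hrun
    refine ⟨L.map e, by simp, ?_⟩
    have himg : (Finset.univ : Finset α).image e = Finset.univ := by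
      apply Finset.eq_univ_of_forall
      intro x
      exact Finset.mem_image.2 ⟨e.symm x, Finset.mem_univ _, by simp⟩
    rwa [himg] at h2

end Transport

/-- for graphs `G₁, G₂` with `mvc(G₁) ≤ mvc(G₂)` there are a graph `Ĝ`
and a positive integer `q` with `min-mdg(Ĝ) = mvc(G₂) + q` and `mvc(Ĝ) = mvc(G₁) + q`. -/
theorem stmt16 {V₁ V₂ : Type*} [Fintype V₁] [Fintype V₂]
    (G₁ : SimpleGraph V₁) (G₂ : SimpleGraph V₂)
    (h : mvc G₁ ≤ mvc G₂) :
    ∃ (n : ℕ) (Ghat : SimpleGraph (Fin n)) (q : ℕ), 0 < q ∧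
      minMdg Ghat = mvc G₂ + q ∧ mvc Ghat = mvc G₁ + q := by
  set a := mvc G₁ with ha
  set b := mvc G₂ with hb
  set d := b - a with hd
  set p := a + 1 with hp
  refine ⟨Fintype.card (TT d p), trG (Fintype.equivFin (TT d p)) (SpG d p), 3 * d + 1,
    by omega, ?_, ?_⟩
  · rw [minMdg_trG, minMdg_SpG]
    omega
  · rw [mvc_trG, mvc_SpG]
    omega

end
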